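/- arXiv:quant-ph/9810091 — 3 statements merged into one kernel-verified Lean document; each statement's English description precedes it below -/
import Mathlib

section
/- Let S = {|α_i⟩⊗|β_i⟩} be a UPB in H_A ⊗ H_B and ρ the normalized projector onto H_S^⊥. Then (id_A ⊗ T)(ρ) is positive semidefinite, where T is transposition on B(H_B) with respect to a fixed orthonormal basis. -/
open scoped BigOperators ComplexConjugate ComplexOrder

noncomputable section

def inC {ι : Type*} [Fintype ι] (x y : ι → ℂ) : ℂ := ∑ i, conj (x i) * y i

def prodVec {ι κ : Type*} (a : ι → ℂ) (b : κ → ℂ) : ι × κ → ℂ := fun p => a p.1 * b p.2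

def outer {ι : Type*} (x : ι → ℂ) : Matrix ι ι ℂ := Matrix.vecMulVec x (star x)

def ONFam {σ ι : Type*} [DecidableEq σ] [Fintype ι] (f : σ → ι → ℂ) : Prop :=
  ∀ i j, inC (f i) (f j) = if i = j then 1 else 0

def IsUPB {σ ιA ιB : Type*} [DecidableEq σ] [Fintype σ] [Fintype ιA] [Fintype ιB]
    (α : σ → ιA → ℂ) (β : σ → ιB → ℂ) : Prop :=
  ONFam (fun i => prodVec (α i) (β i)) ∧
  Submodule.span ℂ (Set.range fun i => prodVec (α i) (β i)) ≠ ⊤ ∧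
  ∀ (a : ιA → ℂ) (b : ιB → ℂ), a ≠ 0 → b ≠ 0 →
    (∀ i, inC (prodVec (α i) (β i)) (prodVec a b) = 0) → False

/-- Partial transpose on the second tensor factor (in the standard basis). -/
def ptrB {ιA ιB : Type*} (ρ : Matrix (ιA × ιB) (ιA × ιB) ℂ) :
    Matrix (ιA × ιB) (ιA × ιB) ℂ :=
  Matrix.of fun p q => ρ (p.1, q.2) (q.1, p.2)

/-!
The partial transpose is linear, fixes the identity, and sends the projector onto `a ⊗ b` to the
projector onto `a ⊗ b̄`. Conjugating the `B`-factors of an orthonormal family of product vectors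
keeps it orthonormal, so `ptrB ρ` is a nonnegative multiple of `1 - P` with `P` an orthogonal
projection, hence positive semidefinite.
-/

open Matrix
open scoped MatrixOrder

section InnerProduct

variable {ι ιA ιB : Type*} [Fintype ι] [Fintype ιA] [Fintype ιB]

lemma inC_prodVec (a c : ιA → ℂ) (b d : ιB → ℂ) :
    inC (prodVec a b) (prodVec c d) = inC a c * inC b d := by
  simp only [inC, prodVec, Finset.sum_mul_sum, Fintype.sum_prod_type, map_mul]
  exact Finset.sum_congr rfl fun _ _ => Finset.sum_congr rfl fun _ _ => by ring

lemma conj_inC (x y : ι → ℂ) : conj (inC x y) = inC y x := by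
  simp only [inC, map_sum, map_mul, Complex.conj_conj, mul_comm]

lemma inC_star_star (x y : ι → ℂ) : inC (star x) (star y) = inC y x := by
  simp only [inC, Pi.star_apply, RCLike.star_def, Complex.conj_conj, mul_comm]

lemma ONFam.prodVec_star {σ : Type*} [DecidableEq σ] {α : σ → ιA → ℂ} {β : σ → ιB → ℂ}
    (h : ONFam fun i => prodVec (α i) (β i)) :
    ONFam fun i => prodVec (α i) (star (β i)) := by
  intro i j
  have hij := h i j
  simp only [inC_prodVec, inC_star_star] at hij ⊢
  rcases eq_or_ne i j with rfl | hne
  · exact hij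
  · -- one of the two factors of the vanishing product ⟪αᵢ, αⱼ⟫⟪βᵢ, βⱼ⟫ is zero
    rw [if_neg hne] at hij ⊢
    rw [← conj_inC (β i), mul_eq_zero, map_eq_zero]
    exact mul_eq_zero.mp hij

end InnerProduct

section Projection

variable {σ ι : Type*}

lemma isSelfAdjoint_outer (x : ι → ℂ) : IsSelfAdjoint (outer x) := by
  simp [IsSelfAdjoint, outer, star_eq_conjTranspose]

variable [Fintype σ] [DecidableEq σ] [Fintype ι]

lemma outer_mul_outer (x y : ι → ℂ) :
    outer x * outer y = inC x y • vecMulVec x (star y) := by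
  rw [outer, outer, vecMulVec_mul_vecMulVec, vecMulVec_smul]
  rfl

lemma isStarProjection_sum_outer {v : σ → ι → ℂ} (h : ONFam v) :
    IsStarProjection (∑ i, outer (v i)) where
  isIdempotentElem := by
    simp only [IsIdempotentElem, Finset.sum_mul_sum, outer_mul_outer, h _ _, ite_smul, one_smul,
      zero_smul, Finset.sum_ite_eq, Finset.mem_univ, if_true]
    rfl
  isSelfAdjoint := isSelfAdjoint_sum _ fun i _ => isSelfAdjoint_outer (v i)

lemma posSemidef_one_sub_sum_outer [DecidableEq ι] {v : σ → ι → ℂ} (h : ONFam v) :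
    (1 - ∑ i, outer (v i)).PosSemidef :=
  (isStarProjection_sum_outer h).one_sub_nonneg.posSemidef

end Projection

section PartialTranspose

variable {ιA ιB : Type*}

def ptrBLinearMap : Matrix (ιA × ιB) (ιA × ιB) ℂ →ₗ[ℂ] Matrix (ιA × ιB) (ιA × ιB) ℂ where
  toFun := ptrB
  map_add' _ _ := rfl
  map_smul' _ _ := rfl

@[simp]
lemma ptrBLinearMap_apply (M : Matrix (ιA × ιB) (ιA × ιB) ℂ) : ptrBLinearMap M = ptrB M := rfl

lemma ptrB_one [DecidableEq ιA] [DecidableEq ιB] :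
    ptrB (1 : Matrix (ιA × ιB) (ιA × ιB) ℂ) = 1 := by
  ext ⟨a, b⟩ ⟨c, d⟩
  simp only [ptrB, of_apply, one_apply, Prod.mk.injEq]
  grind

lemma ptrB_outer_prodVec (a : ιA → ℂ) (b : ιB → ℂ) :
    ptrB (outer (prodVec a b)) = outer (prodVec a (star b)) := by
  ext p q
  simp only [ptrB, outer, prodVec, of_apply, vecMulVec_apply, Pi.star_apply, star_mul',
    star_star]
  ring

end PartialTranspose

theorem upb_state_ppt_general
    (m n s : ℕ) (α : Fin s → Fin m → ℂ) (β : Fin s → Fin n → ℂ)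
    (hUPB : IsUPB α β)
    (ρ : Matrix (Fin m × Fin n) (Fin m × Fin n) ℂ)
    (hρ : ρ = ((m * n - s : ℕ) : ℂ)⁻¹ • (1 - ∑ i, outer (prodVec (α i) (β i)))) :
    (ptrB ρ).PosSemidef := by
  have hptrB : ptrB ρ = ((m * n - s : ℕ) : ℂ)⁻¹ •
      (1 - ∑ i, outer (prodVec (α i) (star (β i)))) := by
    rw [hρ, ← ptrBLinearMap_apply, map_smul, map_sub, map_sum]
    simp only [ptrBLinearMap_apply, ptrB_one, ptrB_outer_prodVec]
  rw [hptrB]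
  exact (posSemidef_one_sub_sum_outer hUPB.1.prodVec_star).smul (by positivity)

/-- the partial transpose of the UPB state is positive semidefinite. -/
theorem upb_state_ppt
    (m n s : ℕ) (α : Fin s → Fin m → ℂ) (β : Fin s → Fin n → ℂ)
    (hUPB : IsUPB α β) (hs : s < m * n)
    (ρ : Matrix (Fin m × Fin n) (Fin m × Fin n) ℂ)
    (hρ : ρ = ((m * n - s : ℕ) : ℂ)⁻¹ • (1 - ∑ i, outer (prodVec (α i) (β i)))) :
    (ptrB ρ).PosSemidef :=
  upb_state_ppt_general m n s α β hUPB ρ hρ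
end
end

section
/- If S₁ is a UPB in H_A¹ ⊗ H_B¹ and S₂ is a UPB in H_A² ⊗ H_B², then the tensor product set S₁ ⊗ S₂ = {(|α_i¹⟩⊗|α_j²⟩) ⊗ (|β_i¹⟩⊗|β_j²⟩)} is a UPB in (H_A¹ ⊗ H_A²) ⊗ (H_B¹ ⊗ H_B²). -/
open scoped BigOperators ComplexConjugate

noncomputable section

/-!
Orthonormality, and a nonzero vector orthogonal to the span, both pass to `S₁ ⊗ S₂` through the
regrouping `(A¹A²)(B¹B²) ≃ (A¹B¹)(A²B²)`. For unextendibility, contract a product vector `a ⊗ b`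
orthogonal to `S₁ ⊗ S₂` against the `j`-th element `α²ⱼ ⊗ β²ⱼ` of `S₂`: the result
`⟨α²ⱼ|a⟩ ⊗ ⟨β²ⱼ|b⟩` is orthogonal to `S₁`, so one of its factors vanishes for every `j`. Then
nonzero slices `a(a₁, ·)` and `b(b₁, ·)` give a product vector orthogonal to `S₂`.
-/

open Matrix
open scoped ComplexOrder

section InnerProduct

variable {ι κ : Type*}

lemma prodVec_ne_zero {a : ι → ℂ} {b : κ → ℂ} (ha : a ≠ 0) (hb : b ≠ 0) : prodVec a b ≠ 0 := by
  obtain ⟨i, hi⟩ := Function.ne_iff.mp ha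
  obtain ⟨k, hk⟩ := Function.ne_iff.mp hb
  exact fun h => mul_ne_zero hi hk (congrFun h (i, k))

variable [Fintype ι] [Fintype κ]

lemma inC_eq_star_dotProduct (x y : ι → ℂ) : inC x y = star x ⬝ᵥ y := rfl

lemma inC_self_eq_zero {v : ι → ℂ} : inC v v = 0 ↔ v = 0 := dotProduct_star_self_eq_zero

lemma inC_eq_zero_comm {x y : ι → ℂ} : inC x y = 0 ↔ inC y x = 0 := by
  rw [inC_eq_star_dotProduct, star_dotProduct, star_eq_zero]
  rfl

lemma span_ne_top_iff_exists_inC_eq_zero {S : Set (ι → ℂ)} :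
    Submodule.span ℂ S ≠ ⊤ ↔ ∃ w ≠ 0, ∀ v ∈ S, inC v w = 0 := by
  classical
  constructor
  · intro hS
    obtain ⟨f, hf0, hSf⟩ := (Submodule.span ℂ S).exists_le_ker_of_lt_top hS.lt_top
    set u := (dotProductEquiv ℂ ι).symm f
    have hf : ∀ v, f v = inC (star u) v := fun v => by
      rw [inC_eq_star_dotProduct, star_star, ← dotProductEquiv_apply_apply,
        LinearEquiv.apply_symm_apply]
    refine ⟨star u, fun hu => hf0 (LinearMap.ext fun v => by rw [hf, hu]; simp [inC]), ?_⟩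
    exact fun v hv => inC_eq_zero_comm.mpr ((hf v).symm.trans (hSf (Submodule.subset_span hv)))
  · rintro ⟨w, hw0, hw⟩ hS
    have hSw : Submodule.span ℂ S ≤ LinearMap.ker (dotProductEquiv ℂ ι (star w)) :=
      Submodule.span_le.mpr fun v hv => inC_eq_zero_comm.mp (hw v hv)
    exact hw0 (inC_self_eq_zero.mp (hSw (hS ▸ Submodule.mem_top : w ∈ Submodule.span ℂ S)))

lemma inC_comp_equiv (e : ι ≃ κ) (x y : κ → ℂ) : inC (x ∘ e) (y ∘ e) = inC x y :=
  e.sum_comp fun k => conj (x k) * y k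

lemma inC_prodVec_s15 (x u : ι → ℂ) (y v : κ → ℂ) :
    inC (prodVec x y) (prodVec u v) = inC x u * inC y v := by
  simp only [inC, prodVec, Fintype.sum_prod_type, Finset.sum_mul_sum, map_mul]
  exact Finset.sum_congr rfl fun i _ => Finset.sum_congr rfl fun k _ => by ring

def partialInC (y : κ → ℂ) (a : ι × κ → ℂ) : ι → ℂ := fun i => inC y fun k => a (i, k)

lemma inC_prodVec_eq_inC_partialInC (x : ι → ℂ) (y : κ → ℂ) (a : ι × κ → ℂ) :
    inC (prodVec x y) a = inC x (partialInC y a) := by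
  simp only [inC, prodVec, partialInC, Fintype.sum_prod_type, Finset.mul_sum, map_mul, mul_assoc]

end InnerProduct

section Regrouping

variable {ι₁ ι₂ κ₁ κ₂ : Type*}

lemma prodVec_prodVec_eq_comp (x₁ : ι₁ → ℂ) (x₂ : ι₂ → ℂ) (y₁ : κ₁ → ℂ) (y₂ : κ₂ → ℂ) :
    prodVec (prodVec x₁ x₂) (prodVec y₁ y₂) =
      prodVec (prodVec x₁ y₁) (prodVec x₂ y₂) ∘ Equiv.prodProdProdComm ι₁ ι₂ κ₁ κ₂ := by
  funext p
  simp only [prodVec, Function.comp_apply, Equiv.prodProdProdComm_apply]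
  ring

variable [Fintype ι₁] [Fintype ι₂] [Fintype κ₁] [Fintype κ₂]

lemma inC_prodVec_prodVec (x₁ u₁ : ι₁ → ℂ) (x₂ u₂ : ι₂ → ℂ) (y₁ v₁ : κ₁ → ℂ) (y₂ v₂ : κ₂ → ℂ) :
    inC (prodVec (prodVec x₁ x₂) (prodVec y₁ y₂)) (prodVec (prodVec u₁ u₂) (prodVec v₁ v₂)) =
      inC (prodVec x₁ y₁) (prodVec u₁ v₁) * inC (prodVec x₂ y₂) (prodVec u₂ v₂) := by
  simp only [inC_prodVec_s15]
  ring

lemma inC_prodVec_prodVec_comp (x₁ : ι₁ → ℂ) (x₂ : ι₂ → ℂ) (y₁ : κ₁ → ℂ) (y₂ : κ₂ → ℂ)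
    (w₁ : ι₁ × κ₁ → ℂ) (w₂ : ι₂ × κ₂ → ℂ) :
    inC (prodVec (prodVec x₁ x₂) (prodVec y₁ y₂))
        (prodVec w₁ w₂ ∘ Equiv.prodProdProdComm ι₁ ι₂ κ₁ κ₂) =
      inC (prodVec x₁ y₁) w₁ * inC (prodVec x₂ y₂) w₂ := by
  rw [prodVec_prodVec_eq_comp, inC_comp_equiv, inC_prodVec_s15]

lemma inC_prodVec_prodVec_partialInC (x₁ : ι₁ → ℂ) (x₂ : ι₂ → ℂ) (y₁ : κ₁ → ℂ) (y₂ : κ₂ → ℂ)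
    (a : ι₁ × ι₂ → ℂ) (b : κ₁ × κ₂ → ℂ) :
    inC (prodVec (prodVec x₁ x₂) (prodVec y₁ y₂)) (prodVec a b) =
      inC (prodVec x₁ y₁) (prodVec (partialInC x₂ a) (partialInC y₂ b)) := by
  rw [inC_prodVec_s15 (prodVec x₁ x₂), inC_prodVec_eq_inC_partialInC x₁,
    inC_prodVec_eq_inC_partialInC y₁, inC_prodVec_s15]

end Regrouping

def prodFam {σ₁ σ₂ ι₁ ι₂ : Type*} (α₁ : σ₁ → ι₁ → ℂ) (α₂ : σ₂ → ι₂ → ℂ) :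
    σ₁ × σ₂ → ι₁ × ι₂ → ℂ :=
  fun p => prodVec (α₁ p.1) (α₂ p.2)

def IsUnextendible {σ ιA ιB : Type*} [Fintype ιA] [Fintype ιB]
    (α : σ → ιA → ℂ) (β : σ → ιB → ℂ) : Prop :=
  ∀ (a : ιA → ℂ) (b : ιB → ℂ), a ≠ 0 → b ≠ 0 →
    (∀ i, inC (prodVec (α i) (β i)) (prodVec a b) = 0) → False

section ProdFam

variable {σ₁ σ₂ ι₁ ι₂ κ₁ κ₂ : Type*} [Fintype ι₁] [Fintype ι₂] [Fintype κ₁] [Fintype κ₂]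
  {α₁ : σ₁ → ι₁ → ℂ} {β₁ : σ₁ → κ₁ → ℂ} {α₂ : σ₂ → ι₂ → ℂ} {β₂ : σ₂ → κ₂ → ℂ}

lemma ONFam.prodFam [DecidableEq σ₁] [DecidableEq σ₂]
    (h₁ : ONFam fun i => prodVec (α₁ i) (β₁ i)) (h₂ : ONFam fun j => prodVec (α₂ j) (β₂ j)) :
    ONFam fun p => prodVec (prodFam α₁ α₂ p) (prodFam β₁ β₂ p) := by
  intro p q
  simp only [_root_.prodFam, inC_prodVec_prodVec, h₁ p.1 q.1, h₂ p.2 q.2, ite_zero_mul_ite_zero,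
    one_mul, Prod.ext_iff]

lemma span_prodFam_ne_top
    (h₁ : Submodule.span ℂ (Set.range fun i => prodVec (α₁ i) (β₁ i)) ≠ ⊤)
    (h₂ : Submodule.span ℂ (Set.range fun j => prodVec (α₂ j) (β₂ j)) ≠ ⊤) :
    Submodule.span ℂ (Set.range fun p => prodVec (prodFam α₁ α₂ p) (prodFam β₁ β₂ p)) ≠ ⊤ := by
  obtain ⟨w₁, hw₁0, hw₁⟩ := span_ne_top_iff_exists_inC_eq_zero.mp h₁
  obtain ⟨w₂, hw₂0, hw₂⟩ := span_ne_top_iff_exists_inC_eq_zero.mp h₂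
  refine span_ne_top_iff_exists_inC_eq_zero.mpr
    ⟨prodVec w₁ w₂ ∘ Equiv.prodProdProdComm ι₁ ι₂ κ₁ κ₂, ?_, ?_⟩
  · exact fun h => prodVec_ne_zero hw₁0 hw₂0
      ((Equiv.prodProdProdComm ι₁ ι₂ κ₁ κ₂).surjective.injective_comp_right h)
  · rintro - ⟨p, rfl⟩
    calc _ = inC (prodVec (α₁ p.1) (β₁ p.1)) w₁ * inC (prodVec (α₂ p.2) (β₂ p.2)) w₂ :=
          inC_prodVec_prodVec_comp _ _ _ _ w₁ w₂
      _ = 0 := by rw [hw₁ _ ⟨p.1, rfl⟩, zero_mul]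

lemma IsUnextendible.prodFam (h₁ : IsUnextendible α₁ β₁) (h₂ : IsUnextendible α₂ β₂) :
    IsUnextendible (prodFam α₁ α₂) (prodFam β₁ β₂) := by
  intro a b ha hb horth
  have hcontract : ∀ j, partialInC (α₂ j) a = 0 ∨ partialInC (β₂ j) b = 0 := by
    intro j
    by_contra! ⟨hA, hB⟩
    exact h₁ _ _ hA hB fun i => by
      rw [← inC_prodVec_prodVec_partialInC]
      exact horth (i, j)
  obtain ⟨⟨a₁, a₂⟩, ha₁⟩ := Function.ne_iff.mp ha
  obtain ⟨⟨b₁, b₂⟩, hb₁⟩ := Function.ne_iff.mp hb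
  refine h₂ (fun k => a (a₁, k)) (fun k => b (b₁, k))
    (fun h => ha₁ (congrFun h a₂)) (fun h => hb₁ (congrFun h b₂)) fun j => ?_
  rw [inC_prodVec_s15]
  rcases hcontract j with hA | hB
  · rw [show inC (α₂ j) _ = 0 from congrFun hA a₁, zero_mul]
  · rw [show inC (β₂ j) _ = 0 from congrFun hB b₁, mul_zero]

end ProdFam

/-- the tensor product of two UPBs (w.r.t. the bipartition
`A = A¹A²`, `B = B¹B²`) is again a UPB. -/
theorem tensor_product_of_upbs_is_upb
    (m₁ n₁ s₁ m₂ n₂ s₂ : ℕ)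
    (α₁ : Fin s₁ → Fin m₁ → ℂ) (β₁ : Fin s₁ → Fin n₁ → ℂ)
    (α₂ : Fin s₂ → Fin m₂ → ℂ) (β₂ : Fin s₂ → Fin n₂ → ℂ)
    (h₁ : IsUPB α₁ β₁) (h₂ : IsUPB α₂ β₂) :
    IsUPB (fun p : Fin s₁ × Fin s₂ => prodVec (α₁ p.1) (α₂ p.2))
          (fun p : Fin s₁ × Fin s₂ => prodVec (β₁ p.1) (β₂ p.2)) :=
  ⟨h₁.1.prodFam h₂.1, span_prodFam_ne_top h₁.2.1 h₂.2.1,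
    IsUnextendible.prodFam h₁.2.2 h₂.2.2⟩
end
end

section
/- With the pyramid vectors |v_i⟩ as above, the five product states |p_i⟩ = |v_i⟩ ⊗ |v_{2i mod 5}⟩, i = 0,…,4, are mutually orthonormal in C³ ⊗ C³. -/
open scoped BigOperators ComplexConjugate

noncomputable section

def h5 : ℝ := (1 / 2) * Real.sqrt (1 + Real.sqrt 5)

def N5 : ℝ := 2 / Real.sqrt (5 + Real.sqrt 5)

def v (i : Fin 5) : Fin 3 → ℂ :=
  ![((N5 * Real.cos (2 * Real.pi * (i : ℕ) / 5) : ℝ) : ℂ),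
    ((N5 * Real.sin (2 * Real.pi * (i : ℕ) / 5) : ℝ) : ℂ),
    ((N5 * h5 : ℝ) : ℂ)]

lemma inC_prod {ι κ : Type*} [Fintype ι] [Fintype κ] (a c : ι → ℂ) (b d : κ → ℂ) :
    inC (prodVec a b) (prodVec c d) = inC a c * inC b d := by
  simp only [inC, prodVec, Fintype.sum_prod_type, Finset.sum_mul_sum, map_mul]
  congr 1; ext i; congr 1; ext j; ring

lemma inner_v (i j : Fin 5) : inC (v i) (v j) =
    ((N5^2 * (Real.cos (2*Real.pi*(i:ℕ)/5 - 2*Real.pi*(j:ℕ)/5) + h5^2) : ℝ) : ℂ) := by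
  simp only [inC, v, Fin.sum_univ_three, Matrix.cons_val_zero, Matrix.cons_val_one,
    Matrix.head_cons, Matrix.cons_val_two, Matrix.tail_cons, Complex.conj_ofReal,
    ← Complex.ofReal_mul, ← Complex.ofReal_add]
  norm_cast
  rw [Real.cos_sub]
  ring

lemma h5_sq : h5^2 = (1 + Real.sqrt 5)/4 := by
  have h : (0:ℝ) ≤ 1 + Real.sqrt 5 := by positivity
  rw [h5, mul_pow]
  ring_nf
  rw [Real.sq_sqrt h]
  ring

lemma norm_fact : N5^2 * (1 + h5^2) = 1 := by
  have h : (0:ℝ) < 5 + Real.sqrt 5 := by positivity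
  rw [h5_sq, N5, div_pow, Real.sq_sqrt h.le]
  field_simp
  ring

lemma v_norm (i : Fin 5) : inC (v i) (v i) = 1 := by
  rw [inner_v, sub_self, Real.cos_zero]
  rw [norm_fact]
  norm_num

lemma zero_of_cos (t : ℝ) (h : Real.cos t = -((1 + Real.sqrt 5)/4)) :
    ((N5^2 * (Real.cos t + h5^2) : ℝ) : ℂ) = 0 := by
  rw [h, h5_sq]
  norm_num

lemma v02 : inC (v 0) (v 2) = 0 := by
  rw [inner_v]; apply zero_of_cos
  rw [show (2*Real.pi*(((0:Fin 5):ℕ):ℝ)/5 - 2*Real.pi*(((2:Fin 5):ℕ):ℝ)/5 : ℝ)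
      = -(Real.pi - Real.pi/5) by norm_num [show ((3:Fin 5):ℕ)=3 from rfl, show ((4:Fin 5):ℕ)=4 from rfl]; ring,
    Real.cos_neg, Real.cos_pi_sub, Real.cos_pi_div_five]

lemma v13 : inC (v 1) (v 3) = 0 := by
  rw [inner_v]; apply zero_of_cos
  rw [show (2*Real.pi*(((1:Fin 5):ℕ):ℝ)/5 - 2*Real.pi*(((3:Fin 5):ℕ):ℝ)/5 : ℝ)
      = -(Real.pi - Real.pi/5) by norm_num [show ((3:Fin 5):ℕ)=3 from rfl, show ((4:Fin 5):ℕ)=4 from rfl]; ring,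
    Real.cos_neg, Real.cos_pi_sub, Real.cos_pi_div_five]

lemma v24 : inC (v 2) (v 4) = 0 := by
  rw [inner_v]; apply zero_of_cos
  rw [show (2*Real.pi*(((2:Fin 5):ℕ):ℝ)/5 - 2*Real.pi*(((4:Fin 5):ℕ):ℝ)/5 : ℝ)
      = -(Real.pi - Real.pi/5) by norm_num [show ((3:Fin 5):ℕ)=3 from rfl, show ((4:Fin 5):ℕ)=4 from rfl]; ring,
    Real.cos_neg, Real.cos_pi_sub, Real.cos_pi_div_five]

lemma v03 : inC (v 0) (v 3) = 0 := by
  rw [inner_v]; apply zero_of_cos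
  rw [show (2*Real.pi*(((0:Fin 5):ℕ):ℝ)/5 - 2*Real.pi*(((3:Fin 5):ℕ):ℝ)/5 : ℝ)
      = -(Real.pi/5 + Real.pi) by norm_num [show ((3:Fin 5):ℕ)=3 from rfl, show ((4:Fin 5):ℕ)=4 from rfl]; ring,
    Real.cos_neg, Real.cos_add_pi, Real.cos_pi_div_five]

lemma v14 : inC (v 1) (v 4) = 0 := by
  rw [inner_v]; apply zero_of_cos
  rw [show (2*Real.pi*(((1:Fin 5):ℕ):ℝ)/5 - 2*Real.pi*(((4:Fin 5):ℕ):ℝ)/5 : ℝ)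
      = -(Real.pi/5 + Real.pi) by norm_num [show ((3:Fin 5):ℕ)=3 from rfl, show ((4:Fin 5):ℕ)=4 from rfl]; ring,
    Real.cos_neg, Real.cos_add_pi, Real.cos_pi_div_five]

lemma inC_symm_zero {ι : Type*} [Fintype ι] {x y : ι → ℂ} (h : inC x y = 0) :
    inC y x = 0 := by
  have : inC y x = conj (inC x y) := by
    simp only [inC, map_sum, map_mul, Complex.conj_conj]
    exact Finset.sum_congr rfl fun i _ => (mul_comm _ _)
  rw [this, h, map_zero]

lemma v20 : inC (v 2) (v 0) = 0 := inC_symm_zero v02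
lemma v31 : inC (v 3) (v 1) = 0 := inC_symm_zero v13
lemma v42 : inC (v 4) (v 2) = 0 := inC_symm_zero v24
lemma v30 : inC (v 3) (v 0) = 0 := inC_symm_zero v03
lemma v41 : inC (v 4) (v 1) = 0 := inC_symm_zero v14

set_option maxHeartbeats 2000000 in
/-- the five product states `|p_i⟩ = |v_i⟩ ⊗ |v_{2i mod 5}⟩` are
mutually orthonormal in `C³ ⊗ C³`. -/
theorem pentagon_product_states_orthonormal :
    ONFam (fun i : Fin 5 => prodVec (v i) (v (2 * i))) := by
  intro i j
  simp only
  fin_cases i <;> fin_cases j <;> rw [inC_prod]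
  · rw [if_pos rfl, v_norm, v_norm]; norm_num
  · rw [if_neg (by decide), mul_eq_zero]; exact Or.inr v02
  · rw [if_neg (by decide), mul_eq_zero]; exact Or.inl v02
  · rw [if_neg (by decide), mul_eq_zero]; exact Or.inl v03
  · rw [if_neg (by decide), mul_eq_zero]; exact Or.inr v03
  · rw [if_neg (by decide), mul_eq_zero]; exact Or.inr v20
  · rw [if_pos rfl, v_norm, v_norm]; norm_num
  · rw [if_neg (by decide), mul_eq_zero]; exact Or.inr v24
  · rw [if_neg (by decide), mul_eq_zero]; exact Or.inl v13
  · rw [if_neg (by decide), mul_eq_zero]; exact Or.inl v14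
  · rw [if_neg (by decide), mul_eq_zero]; exact Or.inl v20
  · rw [if_neg (by decide), mul_eq_zero]; exact Or.inr v42
  · rw [if_pos rfl, v_norm, v_norm]; norm_num
  · rw [if_neg (by decide), mul_eq_zero]; exact Or.inr v41
  · rw [if_neg (by decide), mul_eq_zero]; exact Or.inl v24
  · rw [if_neg (by decide), mul_eq_zero]; exact Or.inl v30
  · rw [if_neg (by decide), mul_eq_zero]; exact Or.inl v31
  · rw [if_neg (by decide), mul_eq_zero]; exact Or.inr v14
  · rw [if_pos rfl, v_norm, v_norm]; norm_num
  · rw [if_neg (by decide), mul_eq_zero]; exact Or.inr v13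
  · rw [if_neg (by decide), mul_eq_zero]; exact Or.inr v30
  · rw [if_neg (by decide), mul_eq_zero]; exact Or.inl v41
  · rw [if_neg (by decide), mul_eq_zero]; exact Or.inl v42
  · rw [if_neg (by decide), mul_eq_zero]; exact Or.inr v31
  · rw [if_pos rfl, v_norm, v_norm]; norm_num
end
end
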